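/- Suppose a routing scheme R on a capacitated graph G assigns to each ordered pair (s,t) a distribution R_{s,t} over s–t walks, and suppose R is 'tree-based': there is a distribution 𝒯 over complete tree embeddings (T, T^G) with V(T) = V(G) such that R_{s,t} is the law of T^G_{s,t}. If the flow obtained by routing the demand 𝒟¹ (where 𝒟¹_{s,t} = c_{{s,t}} for edges {s,t} ∈ E(G) and 0 otherwise) through R has congestion at most α, then for every demand 𝒟 : V×V → ℝ≥0, the congestion of routing 𝒟 through R is at most α · opt^{(∞)}(𝒟), where opt^{(∞)}(𝒟) is the minimum congestion over all (fractional, hop-unconstrained) routings of 𝒟. -/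
import Mathlib


/-- The number of traversals of the edge `e` by the walk `p` (the flow of `p` at `e`). -/
def walkFlow {V : Type*} [DecidableEq V] {G : SimpleGraph V} {s t : V}
    (p : G.Walk s t) (e : Sym2 V) : ℕ := p.edges.count e

open SimpleGraph Finset

lemma list_sum_map_le {α : Type*} [DecidableEq α] {l₁ l₂ : List α} (h : l₁ ⊆ l₂)
    (hn : l₁.Nodup) (g : α → ℕ) : (l₁.map g).sum ≤ (l₂.map g).sum := by
  rw [← List.sum_toFinset g hn, Finset.sum_list_map_count l₂ g]
  calc ∑ d ∈ l₁.toFinset, g d ≤ ∑ d ∈ l₁.toFinset, l₂.count d • g d := by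
        refine Finset.sum_le_sum fun d hd => ?_
        have h1 : 1 ≤ l₂.count d :=
          List.count_pos_iff.mpr (h (List.mem_toFinset.mp hd))
        simpa using Nat.mul_le_mul_right (g d) h1
    _ ≤ ∑ d ∈ l₂.toFinset, l₂.count d • g d := by
        refine Finset.sum_le_sum_of_subset fun d hd => ?_
        simp only [List.mem_toFinset] at *
        exact h hd

lemma treeWalkBound {V : Type*} [DecidableEq V] {G T : SimpleGraph V} (hT : T.IsTree)
    (q : ∀ u v : V, T.Walk u v) (hqp : ∀ u v, (q u v).IsPath) (g : Sym2 V → ℕ) :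
    ∀ {u v : V} (p : G.Walk u v), ((q u v).edges.map g).sum ≤
      (p.darts.map fun d => ((q d.toProd.1 d.toProd.2).edges.map g).sum).sum := by
  intro u v p
  induction p with
  | @nil w =>
    have h0 : q w w = Walk.nil := (hT.existsUnique_path _ _).unique (hqp _ _) Walk.IsPath.nil
    simp [h0]
  | @cons a b v h p ih =>
    have htri : ((q a v).edges.map g).sum ≤
        ((q a b).edges.map g).sum + ((q b v).edges.map g).sum := by
      have hb : q a v = ((q a b).append (q b v)).bypass :=
        (hT.existsUnique_path a v).unique (hqp a v) (Walk.bypass_isPath _)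
      have hle := list_sum_map_le (Walk.edges_bypass_subset ((q a b).append (q b v)))
        (Walk.bypass_isPath _).edges_nodup g
      rw [hb]
      simpa [Walk.edges_append] using hle
    simpa using htri.trans (by exact Nat.add_le_add_left ih _)

/-- Tree-based oblivious routings competitive on `𝒟¹` are competitive on every
demand. A (joint) routing scheme is modeled by a finite distribution `μ` over samples `ω`,
each sample giving a walk `W ω u v` from `u` to `v` for every ordered pair; `R_{u,v}` is the
law of `W · u v`. The scheme is tree-based: each sample `ω` comes from a complete tree
embedding, i.e. there is a tree `T` on `V` and per-tree-edge flows `F d` (the flow in `G` of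
the walk embedding the tree edge `d`) such that the flow of `W ω u v` equals the sum of
`F d` over the edges `d` of the unique `u–v` path in `T`. If routing the demand
`𝒟¹_{u,v} = c {u,v} · 1{u,v adjacent}` through the scheme has congestion at most `α`
(`flow(𝒟¹, R)_e ≤ α · c e` on every edge), then for every demand `𝒟 ≥ 0` and every
(hop-unconstrained fractional) routing `P` of `𝒟` with congestion at most `κ`, the congestion
of routing `𝒟` through `R` is at most `α · κ`; hence it is at most `α · opt^{(∞)}(𝒟)`. -/
theorem stmt10 {V : Type*} [Fintype V] [DecidableEq V]
    (G : SimpleGraph V) [DecidableRel G.Adj]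
    (c : Sym2 V → ℝ) (hc : ∀ e ∈ G.edgeSet, 0 < c e)
    {Ω : Type*} [Fintype Ω] (μ : Ω → ℝ) (hμ0 : ∀ ω, 0 ≤ μ ω) (hμ1 : ∑ ω, μ ω = 1)
    (W : Ω → ∀ u v : V, G.Walk u v)
    (hTree : ∀ ω : Ω, ∃ (T : SimpleGraph V) (_ : T.IsTree) (F : Sym2 V → Sym2 V → ℕ),
      ∀ u v : V, ∃ q : T.Walk u v, q.IsPath ∧
        ∀ e : Sym2 V, walkFlow (W ω u v) e = (q.edges.map (fun d => F d e)).sum)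
    (α : ℝ) (hα : 0 ≤ α)
    (hD1 : ∀ e ∈ G.edgeSet,
      ∑ ω, μ ω * ∑ u, ∑ v, (if G.Adj u v then c s(u, v) else 0) * (walkFlow (W ω u v) e : ℝ)
        ≤ α * c e)
    (𝒟 : V → V → ℝ) (h𝒟 : ∀ u v, 0 ≤ 𝒟 u v)
    {Ω' : Type*} [Fintype Ω'] (ν : Ω' → ℝ) (hν0 : ∀ ω, 0 ≤ ν ω) (hν1 : ∑ ω, ν ω = 1)
    (P : Ω' → ∀ u v : V, G.Walk u v) (κ : ℝ) (hκ : 0 ≤ κ)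
    (hP : ∀ e ∈ G.edgeSet,
      ∑ ω, ν ω * ∑ u, ∑ v, 𝒟 u v * (walkFlow (P ω u v) e : ℝ) ≤ κ * c e) :
    ∀ e ∈ G.edgeSet,
      ∑ ω, μ ω * ∑ u, ∑ v, 𝒟 u v * (walkFlow (W ω u v) e : ℝ) ≤ α * κ * c e := by
  intro e he
  -- Step 1: per-sample bound against the demand 𝒟¹
  have step1 : ∀ ω : Ω,
      ∑ u, ∑ v, 𝒟 u v * (walkFlow (W ω u v) e : ℝ) ≤
      κ * ∑ u, ∑ v, (if G.Adj u v then c s(u, v) else 0) * (walkFlow (W ω u v) e : ℝ) := by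
    intro ω
    obtain ⟨T, hT, F, hTF⟩ := hTree ω
    choose q hqp hqf using hTF
    set g : Sym2 V → ℕ := fun d => F d e with hg
    have hsymm : ∀ x y : V, walkFlow (W ω x y) e = walkFlow (W ω y x) e := by
      intro x y
      rw [hqf x y e, hqf y x e]
      have hrev : q y x = (q x y).reverse :=
        (hT.existsUnique_path y x).unique (hqp y x) ((hqp x y).reverse)
      rw [hrev, Walk.edges_reverse, List.map_reverse, List.sum_reverse]
    set M : Sym2 V → ℕ := Sym2.lift ⟨fun x y => walkFlow (W ω x y) e, hsymm⟩ with hM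
    have hMs : ∀ x y : V, M s(x, y) = walkFlow (W ω x y) e := fun x y => Sym2.lift_mk _ x y
    -- key per-pair bound
    have key : ∀ (ω' : Ω') (u v : V),
        walkFlow (W ω u v) e ≤
          ∑ e' ∈ G.edgeFinset, walkFlow (P ω' u v) e' * M e' := by
      intro ω' u v
      have h1 : walkFlow (W ω u v) e ≤
          ((P ω' u v).darts.map fun d => ((q d.toProd.1 d.toProd.2).edges.map g).sum).sum := by
        rw [hqf u v e]
        exact treeWalkBound hT q hqp g (P ω' u v)
      have h2 : ((P ω' u v).darts.map fun d => ((q d.toProd.1 d.toProd.2).edges.map g).sum).sum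
          = ((P ω' u v).edges.map M).sum := by
        rw [Walk.edges, List.map_map]
        have hfun : (fun d : G.Dart => ((q d.toProd.1 d.toProd.2).edges.map g).sum)
            = M ∘ Dart.edge := by
          funext d
          simp only [Function.comp_apply]
          rw [show d.edge = s(d.toProd.1, d.toProd.2) from rfl,
            hMs d.toProd.1 d.toProd.2, hqf]
        rw [hfun]
      have h3 : ((P ω' u v).edges.map M).sum
          = ∑ e' ∈ G.edgeFinset, (P ω' u v).edges.count e' * M e' := by
        rw [Finset.sum_list_map_count]
        refine Finset.sum_subset ?_ ?_
        · intro x hx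
          exact mem_edgeFinset.mpr ((P ω' u v).edges_subset_edgeSet (List.mem_toFinset.mp hx))
        · intro x _ hx
          simp only [List.mem_toFinset] at hx
          simp [List.count_eq_zero_of_not_mem hx]
      calc walkFlow (W ω u v) e ≤ _ := h1
        _ = _ := h2
        _ = _ := h3
    -- real-valued per-pair bound averaged over ω'
    have hreal : ∀ u v : V, (walkFlow (W ω u v) e : ℝ) ≤
        ∑ ω', ν ω' * ∑ e' ∈ G.edgeFinset, (walkFlow (P ω' u v) e' : ℝ) * (M e' : ℝ) := by
      intro u v
      calc (walkFlow (W ω u v) e : ℝ)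
          = ∑ ω', ν ω' * (walkFlow (W ω u v) e : ℝ) := by rw [← Finset.sum_mul, hν1, one_mul]
        _ ≤ _ := by
            refine Finset.sum_le_sum fun ω' _ => mul_le_mul_of_nonneg_left ?_ (hν0 ω')
            exact_mod_cast key ω' u v
    have hA : ∑ u, ∑ v, 𝒟 u v * (walkFlow (W ω u v) e : ℝ) ≤
        ∑ u, ∑ v, 𝒟 u v *
          ∑ ω', ν ω' * ∑ e' ∈ G.edgeFinset, (walkFlow (P ω' u v) e' : ℝ) * (M e' : ℝ) := by
      refine Finset.sum_le_sum fun u _ => Finset.sum_le_sum fun v _ => ?_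
      exact mul_le_mul_of_nonneg_left (hreal u v) (h𝒟 u v)
    have hswap : ∑ u, ∑ v, 𝒟 u v *
          ∑ ω', ν ω' * ∑ e' ∈ G.edgeFinset, (walkFlow (P ω' u v) e' : ℝ) * (M e' : ℝ)
        = ∑ e' ∈ G.edgeFinset, (M e' : ℝ) *
            ∑ ω', ν ω' * ∑ u, ∑ v, 𝒟 u v * (walkFlow (P ω' u v) e' : ℝ) := by
      simp only [Finset.mul_sum]
      calc ∑ u, ∑ v, ∑ ω', ∑ e' ∈ G.edgeFinset,
              𝒟 u v * (ν ω' * ((walkFlow (P ω' u v) e' : ℝ) * (M e' : ℝ)))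
          = ∑ u, ∑ ω', ∑ v, ∑ e' ∈ G.edgeFinset,
              𝒟 u v * (ν ω' * ((walkFlow (P ω' u v) e' : ℝ) * (M e' : ℝ))) :=
            Finset.sum_congr rfl fun u _ => Finset.sum_comm
        _ = ∑ ω', ∑ u, ∑ v, ∑ e' ∈ G.edgeFinset,
              𝒟 u v * (ν ω' * ((walkFlow (P ω' u v) e' : ℝ) * (M e' : ℝ))) :=
            Finset.sum_comm
        _ = ∑ ω', ∑ u, ∑ e' ∈ G.edgeFinset, ∑ v,
              𝒟 u v * (ν ω' * ((walkFlow (P ω' u v) e' : ℝ) * (M e' : ℝ))) :=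
            Finset.sum_congr rfl fun ω' _ => Finset.sum_congr rfl fun u _ => Finset.sum_comm
        _ = ∑ ω', ∑ e' ∈ G.edgeFinset, ∑ u, ∑ v,
              𝒟 u v * (ν ω' * ((walkFlow (P ω' u v) e' : ℝ) * (M e' : ℝ))) :=
            Finset.sum_congr rfl fun ω' _ => Finset.sum_comm
        _ = ∑ e' ∈ G.edgeFinset, ∑ ω', ∑ u, ∑ v,
              𝒟 u v * (ν ω' * ((walkFlow (P ω' u v) e' : ℝ) * (M e' : ℝ))) :=
            Finset.sum_comm
        _ = ∑ e' ∈ G.edgeFinset, ∑ ω', ∑ u, ∑ v,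
              (M e' : ℝ) * (ν ω' * (𝒟 u v * (walkFlow (P ω' u v) e' : ℝ))) :=
            Finset.sum_congr rfl fun e' _ => Finset.sum_congr rfl fun ω' _ =>
              Finset.sum_congr rfl fun u _ => Finset.sum_congr rfl fun v _ => by ring
    have hB : ∑ e' ∈ G.edgeFinset, (M e' : ℝ) *
            ∑ ω', ν ω' * ∑ u, ∑ v, 𝒟 u v * (walkFlow (P ω' u v) e' : ℝ)
        ≤ ∑ e' ∈ G.edgeFinset, (M e' : ℝ) * (κ * c e') := by
      refine Finset.sum_le_sum fun e' he' => ?_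
      exact mul_le_mul_of_nonneg_left (hP e' (mem_edgeFinset.mp he')) (Nat.cast_nonneg _)
    have hC : ∑ e' ∈ G.edgeFinset, (M e' : ℝ) * (κ * c e')
        = κ * ∑ e' ∈ G.edgeFinset, c e' * (M e' : ℝ) := by
      rw [Finset.mul_sum]; exact Finset.sum_congr rfl fun e' _ => by ring
    have hfin : ∑ e' ∈ G.edgeFinset, c e' * (M e' : ℝ) ≤
        ∑ u, ∑ v, (if G.Adj u v then c s(u, v) else 0) * (walkFlow (W ω u v) e : ℝ) := by
      set f : V × V → ℝ := fun p =>
        (if G.Adj p.1 p.2 then c s(p.1, p.2) else 0) * (walkFlow (W ω p.1 p.2) e : ℝ) with hf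
      have hout : ∀ e' : Sym2 V, s((Quot.out e').1, (Quot.out e').2) = e' := by
        intro e'
        conv_rhs => rw [← Quot.out_eq e']
      have hnn : ∀ p : V × V, 0 ≤ f p := by
        intro p
        simp only [hf]
        split_ifs with h
        · exact mul_nonneg (hc _ (G.mem_edgeSet.mpr h)).le (Nat.cast_nonneg _)
        · simp
      calc ∑ e' ∈ G.edgeFinset, c e' * (M e' : ℝ)
          = ∑ e' ∈ G.edgeFinset, f (Quot.out e') := by
            refine Finset.sum_congr rfl fun e' he' => ?_
            have hadj : G.Adj (Quot.out e').1 (Quot.out e').2 := by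
              rw [← G.mem_edgeSet, hout e']
              exact mem_edgeFinset.mp he'
            simp only [hf, if_pos hadj]
            rw [hout e']
            congr 1
            rw [← hMs (Quot.out e').1 (Quot.out e').2, hout e']
        _ = ∑ p ∈ G.edgeFinset.image Quot.out, f p := by
            refine (Finset.sum_image ?_).symm
            intro x _ y _ hxy
            rw [← Quot.out_eq x, ← Quot.out_eq y, hxy]
        _ ≤ ∑ p : V × V, f p :=
            Finset.sum_le_sum_of_subset_of_nonneg (Finset.subset_univ _)
              (fun p _ _ => hnn p)
        _ = ∑ u, ∑ v, (if G.Adj u v then c s(u, v) else 0) * (walkFlow (W ω u v) e : ℝ) := by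
            rw [Fintype.sum_prod_type]
    calc ∑ u, ∑ v, 𝒟 u v * (walkFlow (W ω u v) e : ℝ)
        ≤ _ := hA
      _ = _ := hswap
      _ ≤ _ := hB
      _ = κ * ∑ e' ∈ G.edgeFinset, c e' * (M e' : ℝ) := hC
      _ ≤ _ := mul_le_mul_of_nonneg_left hfin hκ
  -- Step 2: combine
  calc ∑ ω, μ ω * ∑ u, ∑ v, 𝒟 u v * (walkFlow (W ω u v) e : ℝ)
      ≤ ∑ ω, μ ω * (κ * ∑ u, ∑ v,
          (if G.Adj u v then c s(u, v) else 0) * (walkFlow (W ω u v) e : ℝ)) :=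
        Finset.sum_le_sum fun ω _ => mul_le_mul_of_nonneg_left (step1 ω) (hμ0 ω)
    _ = κ * ∑ ω, μ ω * ∑ u, ∑ v,
          (if G.Adj u v then c s(u, v) else 0) * (walkFlow (W ω u v) e : ℝ) := by
        rw [Finset.mul_sum]; exact Finset.sum_congr rfl fun ω _ => by ring
    _ ≤ κ * (α * c e) := mul_le_mul_of_nonneg_left (hD1 e he) hκ
    _ = α * κ * c e := by ring
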